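/- arXiv:2205.03244 — 2 statements merged into one kernel-verified Lean document; each statement's English description precedes it below -/
import Mathlib

section
/- Let g : [0, ∞) → (0, ∞) be a function such that log g is convex, and suppose there are constants C > 0 and λ > 0 such that g(κ) ≤ C e^{−λκ} for all κ greater than some κ₀. Then g(σ) ≤ e^{−λσ} g(0) for all σ ≥ 0. -/
/-!
Adding the linear function `λσ` to the convex function `log g` gives a convex function that is
bounded above near `∞`. A convex function on a ray that is bounded above near `∞` is
nonincreasing, since a positive slope anywhere would force it to grow at least linearly beyond
that point. Hence `log g σ + λσ ≤ log g 0`.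
-/

open Filter Set

theorem ConvexOn.antitoneOn_Ici_of_eventually_le {f : ℝ → ℝ} {a B : ℝ}
    (hf : ConvexOn ℝ (Ici a) f) (hB : ∀ᶠ x in atTop, f x ≤ B) : AntitoneOn f (Ici a) := by
  intro x hx y hy hxy
  rcases hxy.eq_or_lt with rfl | hxy
  · rfl
  by_contra! hlt
  set s := (f y - f x) / (y - x)
  have hs : 0 < s := div_pos (sub_pos.2 hlt) (sub_pos.2 hxy)
  have hline : Tendsto (fun z => f y + s * (z - y)) atTop atTop :=
    tendsto_atTop_add_const_left _ _ <|
      (tendsto_atTop_add_const_right _ (-y) tendsto_id).const_mul_atTop hs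
  obtain ⟨z, hzB, hyz, hBz⟩ :=
    (hB.and ((eventually_gt_atTop y).and (hline.eventually_gt_atTop B))).exists
  have hslope : s ≤ (f z - f y) / (z - y) :=
    hf.slope_mono_adjacent hx (mem_Ici.2 (hy.trans hyz.le)) hxy hyz
  rw [le_div_iff₀ (sub_pos.2 hyz)] at hslope
  linarith

theorem stmt_11_general (g : ℝ → ℝ) (hg : ∀ σ, 0 ≤ σ → 0 < g σ)
    (hconv : ConvexOn ℝ (Set.Ici (0 : ℝ)) fun σ => Real.log (g σ))
    (C lam κ₀ : ℝ) (hC : 0 < C)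
    (hdecay : ∀ κ > κ₀, g κ ≤ C * Real.exp (-lam * κ)) :
    ∀ σ : ℝ, 0 ≤ σ → g σ ≤ Real.exp (-lam * σ) * g 0 := by
  intro σ hσ
  have hconv' : ConvexOn ℝ (Ici 0) fun κ => Real.log (g κ) + lam * κ :=
    hconv.add ((LinearMap.mul ℝ ℝ lam).convexOn (convex_Ici 0))
  have hbound : ∀ᶠ κ in atTop, Real.log (g κ) + lam * κ ≤ Real.log C := by
    filter_upwards [eventually_gt_atTop (max κ₀ 0)] with κ hκ
    have hlog := Real.log_le_log (hg κ (le_max_right _ _ |>.trans hκ.le))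
      (hdecay κ (le_max_left _ _ |>.trans_lt hκ))
    rw [Real.log_mul hC.ne' (Real.exp_ne_zero _), Real.log_exp] at hlog
    linarith
  have key : Real.log (g σ) + lam * σ ≤ Real.log (g 0) := by
    simpa using hconv'.antitoneOn_Ici_of_eventually_le hbound self_mem_Ici hσ hσ
  calc g σ = Real.exp (Real.log (g σ)) := (Real.exp_log (hg σ hσ)).symm
    _ ≤ Real.exp (-lam * σ + Real.log (g 0)) := Real.exp_le_exp.2 (by linarith)
    _ = Real.exp (-lam * σ) * g 0 := by rw [Real.exp_add, Real.exp_log (hg 0 le_rfl)]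

theorem stmt_11 (g : ℝ → ℝ) (hg : ∀ σ, 0 ≤ σ → 0 < g σ)
    (hconv : ConvexOn ℝ (Set.Ici (0 : ℝ)) fun σ => Real.log (g σ))
    (C lam κ₀ : ℝ) (hC : 0 < C) (hlam : 0 < lam)
    (hdecay : ∀ κ > κ₀, g κ ≤ C * Real.exp (-lam * κ)) :
    ∀ σ : ℝ, 0 ≤ σ → g σ ≤ Real.exp (-lam * σ) * g 0 :=
  stmt_11_general g hg hconv C lam κ₀ hC hdecay
end

section
/- Let f be a Dirichlet series in H^p with f(+∞) the constant coefficient, and suppose the pointwise estimate |g(s)| ≤ ζ(2 Re s)^{1/p} ‖g‖_{H^p} holds for every g ∈ H^p and Re s > 1/2. Then for every s = σ + it with σ ≥ 1, |f'(s)| ≤ 3 ζ(4/3)^{1/p} · 2^{−σ+1+1/p} ‖f‖_{H^p}, provided f has vanishing constant term and translation bound ‖T_{σ−1}(f − f(+∞))‖_{H^p} ≤ 2^{−(σ−1)} ‖f − f(+∞)‖_{H^p}. -/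
/-!
Translate by `σ - 1`: the function `g = T_{σ-1} f` is holomorphic on `Re z > 1/2` and
`deriv f s = deriv g (s - (σ - 1))` with `Re (s - (σ - 1)) = 1`. On the circle of radius `1/3`
about that point `Re z ≥ 2/3`, so the pointwise estimate bounds `|g|` there by
`ζ(4/3)^{1/p} ‖g‖`, and Cauchy's estimate gives `|g'| ≤ 3 ζ(4/3)^{1/p} ‖g‖`. The translation
bound `‖g‖ ≤ 2^{-(σ-1)} ‖f‖` finishes the proof.
-/

/-- The real zeta function `ζ(x) = ∑_{n ≥ 1} n^{-x}`. -/
noncomputable def realZeta (x : ℝ) : ℝ := ∑' n : ℕ, ((n : ℝ) + 1) ^ (-x)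

lemma summable_realZeta_terms {x : ℝ} (hx : 1 < x) :
    Summable fun n : ℕ => ((n : ℝ) + 1) ^ (-x) := by
  have h := (summable_nat_add_iff 1).mpr (Real.summable_nat_rpow.mpr (by linarith : -x < -1))
  exact h.congr fun n => by push_cast; rfl

lemma realZeta_nonneg (x : ℝ) : 0 ≤ realZeta x :=
  tsum_nonneg fun _ => Real.rpow_nonneg (by positivity) _

lemma one_le_realZeta {x : ℝ} (hx : 1 < x) : 1 ≤ realZeta x := by
  have h := (summable_realZeta_terms hx).le_tsum 0 fun n _ => Real.rpow_nonneg (by positivity) _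
  simpa [realZeta] using h

lemma realZeta_le_of_le {x y : ℝ} (hx : 1 < x) (hxy : x ≤ y) : realZeta y ≤ realZeta x :=
  (summable_realZeta_terms (hx.trans_le hxy)).tsum_le_tsum
    (fun n => Real.rpow_le_rpow_of_exponent_le (by linarith [n.cast_nonneg (α := ℝ)])
      (neg_le_neg hxy))
    (summable_realZeta_terms hx)

lemma Complex.re_sub_le_re_of_mem_closedBall {w z : ℂ} {r : ℝ}
    (hz : z ∈ Metric.closedBall w r) : w.re - r ≤ z.re := by
  have h := (Complex.abs_re_le_norm (z - w)).trans (mem_closedBall_iff_norm.mp hz)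
  rw [Complex.sub_re] at h
  linarith [(abs_le.mp h).1]

lemma Complex.norm_deriv_le_of_forall_re_ge_norm_le {g : ℂ → ℂ} {a r M : ℝ} {w : ℂ} (hr : 0 < r)
    (ha : a < w.re - r) (hg : DifferentiableOn ℂ g {z : ℂ | a < z.re})
    (hM : ∀ z : ℂ, w.re - r ≤ z.re → ‖g z‖ ≤ M) :
    ‖deriv g w‖ ≤ M / r := by
  have hball : Metric.closedBall w r ⊆ {z : ℂ | a < z.re} := fun z hz =>
    ha.trans_le (re_sub_le_re_of_mem_closedBall hz)
  exact norm_deriv_le_of_forall_mem_sphere_norm_le hr (hg.diffContOnCl_ball hball)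
    fun z hz => hM z (re_sub_le_re_of_mem_closedBall (Metric.sphere_subset_closedBall hz))

lemma norm_deriv_le_of_zeta_bound {p N : ℝ} (hp : 0 < p) (hN : 0 ≤ N) {g : ℂ → ℂ}
    (hg : DifferentiableOn ℂ g {z : ℂ | 1 / 2 < z.re})
    (hbound : ∀ z : ℂ, 1 / 2 < z.re → ‖g z‖ ≤ realZeta (2 * z.re) ^ (1 / p) * N)
    {w : ℂ} (hw : 1 ≤ w.re) :
    ‖deriv g w‖ ≤ 3 * realZeta (4 / 3) ^ (1 / p) * N := by
  have hcircle : ∀ z : ℂ, w.re - 1 / 3 ≤ z.re → ‖g z‖ ≤ realZeta (4 / 3) ^ (1 / p) * N := by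
    intro z hz
    have hζ : realZeta (2 * z.re) ≤ realZeta (4 / 3) :=
      realZeta_le_of_le (by norm_num) (by linarith)
    calc ‖g z‖ ≤ realZeta (2 * z.re) ^ (1 / p) * N := hbound z (by linarith)
      _ ≤ realZeta (4 / 3) ^ (1 / p) * N := by
        gcongr
        exact realZeta_nonneg _
  have h := Complex.norm_deriv_le_of_forall_re_ge_norm_le (by norm_num) (by linarith) hg hcircle
  linarith

lemma DifferentiableOn.comp_add_ofReal_halfPlane {f : ℂ → ℂ} {a c : ℝ} (hc : 0 ≤ c)
    (hf : DifferentiableOn ℂ f {z : ℂ | a < z.re}) :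
    DifferentiableOn ℂ (fun z => f (z + c)) {z : ℂ | a < z.re} :=
  hf.comp (differentiableOn_id.add_const _) fun z hz => by
    simp only [Set.mem_ofPred_eq, Complex.add_re, Complex.ofReal_re] at hz ⊢
    linarith

/-- The space `ℋ^p` is encoded by a membership predicate `Hp` and a norm `HpNorm`;
`finf` stands for `f(+∞)`. -/
theorem stmt_16_general (p : ℝ) (hp : 0 < p)
    (Hp : Set (ℂ → ℂ)) (HpNorm : (ℂ → ℂ) → ℝ)
    (f : ℂ → ℂ)
    (hdiff : DifferentiableOn ℂ f {s : ℂ | 1 / 2 < s.re})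
    (hbayart : ∀ g ∈ Hp, ∀ s : ℂ, 1 / 2 < s.re →
      ‖g s‖ ≤ realZeta (2 * s.re) ^ (1 / p) * HpNorm g)
    (finf : ℂ) (hvanish : finf = 0)
    (htransHp : ∀ σ : ℝ, 1 ≤ σ → (fun z => f (z + (σ - 1)) - finf) ∈ Hp)
    (htrans : ∀ σ : ℝ, 1 ≤ σ →
      HpNorm (fun z => f (z + (σ - 1)) - finf) ≤
        2 ^ (-(σ - 1)) * HpNorm (fun z => f z - finf)) :
    ∀ s : ℂ, 1 ≤ s.re →
      ‖deriv f s‖ ≤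
        3 * realZeta (4 / 3) ^ (1 / p) * 2 ^ (-s.re + 1 + 1 / p) * HpNorm f := by
  intro s hs
  subst hvanish
  simp only [sub_zero] at htransHp htrans
  set g : ℂ → ℂ := fun z => f (z + ((s.re : ℂ) - 1))
  have hgHp : g ∈ Hp := htransHp s.re hs
  have hgN : 0 ≤ HpNorm g := by
    have h := (norm_nonneg _).trans (hbayart g hgHp 2 (by norm_num))
    exact nonneg_of_mul_nonneg_right h (Real.rpow_pos_of_pos
      (zero_lt_one.trans_le (one_le_realZeta (by norm_num))) _)
  have hgf : HpNorm g ≤ 2 ^ (-(s.re - 1)) * HpNorm f := htrans s.re hs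
  have hfN : 0 ≤ HpNorm f := nonneg_of_mul_nonneg_right (hgN.trans hgf) (by positivity)
  have hgd : DifferentiableOn ℂ g {z : ℂ | 1 / 2 < z.re} := by
    simpa [g] using hdiff.comp_add_ofReal_halfPlane (c := s.re - 1) (by linarith)
  have hderiv : deriv g (s - ((s.re : ℂ) - 1)) = deriv f s := by
    simp only [g, deriv_comp_add_const, sub_add_cancel]
  have hcauchy := norm_deriv_le_of_zeta_bound hp hgN hgd (hbayart g hgHp)
    (w := s - ((s.re : ℂ) - 1)) (by simp)
  have hpow : (2 : ℝ) ^ (-(s.re - 1)) ≤ 2 ^ (-s.re + 1 + 1 / p) :=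
    Real.rpow_le_rpow_of_exponent_le (by norm_num) (by linarith [one_div_pos.mpr hp])
  rw [hderiv] at hcauchy
  calc ‖deriv f s‖ ≤ 3 * realZeta (4 / 3) ^ (1 / p) * HpNorm g := hcauchy
    _ ≤ 3 * realZeta (4 / 3) ^ (1 / p) * (2 ^ (-s.re + 1 + 1 / p) * HpNorm f) := by
      refine mul_le_mul_of_nonneg_left (hgf.trans (mul_le_mul_of_nonneg_right hpow hfN)) ?_
      exact mul_nonneg (by norm_num) (Real.rpow_nonneg (realZeta_nonneg _) _)
    _ = 3 * realZeta (4 / 3) ^ (1 / p) * 2 ^ (-s.re + 1 + 1 / p) * HpNorm f := by ring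

/-- Bound for the derivative of a Dirichlet series `f ∈ ℋ^p`: the space `ℋ^p` is
encoded by a membership predicate `Hp` and a norm `HpNorm`, subject to Bayart's
pointwise estimate for every `g ∈ ℋ^p`; `finf = f(+∞)` is the constant coefficient,
assumed to vanish, with `|f(+∞)| ≤ ‖f‖_{ℋ^p}`; and the translates
`T_{σ-1}(f - f(+∞))` belong to `ℋ^p` with the translation bound of Theorem C. -/
theorem stmt_16 (p : ℝ) (hp : 0 < p)
    (Hp : Set (ℂ → ℂ)) (HpNorm : (ℂ → ℂ) → ℝ)
    (f : ℂ → ℂ) (hfHp : f ∈ Hp)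
    (hdiff : DifferentiableOn ℂ f {s : ℂ | 1 / 2 < s.re})
    (hbayart : ∀ g ∈ Hp, ∀ s : ℂ, 1 / 2 < s.re →
      ‖g s‖ ≤ realZeta (2 * s.re) ^ (1 / p) * HpNorm g)
    (finf : ℂ) (hfinf : ‖finf‖ ≤ HpNorm f) (hvanish : finf = 0)
    (htransHp : ∀ σ : ℝ, 1 ≤ σ → (fun z => f (z + (σ - 1)) - finf) ∈ Hp)
    (htrans : ∀ σ : ℝ, 1 ≤ σ →
      HpNorm (fun z => f (z + (σ - 1)) - finf) ≤
        2 ^ (-(σ - 1)) * HpNorm (fun z => f z - finf)) :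
    ∀ s : ℂ, 1 ≤ s.re →
      ‖deriv f s‖ ≤
        3 * realZeta (4 / 3) ^ (1 / p) * 2 ^ (-s.re + 1 + 1 / p) * HpNorm f :=
  stmt_16_general p hp Hp HpNorm f hdiff hbayart finf hvanish htransHp htrans
end
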